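/- arXiv:2603.04172 — 3 statements merged into one kernel-verified Lean document; each statement's English description precedes it below -/
import Mathlib

section
/- Let L : ℝ^p × ℝ^k → ℝ be a loss in parameters (β, τ) that admits a second-order Taylor expansion at the point (0, τ̂), i.e. L(β, τ̂ + u) = L(0, τ̂) + ⟨β, ∇_β L(0, τ̂)⟩ + (1/2)(β,u)ᵀ H (β,u) + o(‖(β,u)‖²) as (β,u) → 0, where ∇_τ L(0, τ̂) = 0 and the τ–τ block H_ττ of the Hessian H is positive definite. Let C be a first-order ℓ1-equivalent complexity penalty. If λ > ‖∇_β L(0, τ̂)‖_∞, then (0, τ̂) is a local minimizer of (β, τ) ↦ L(β, τ) + λ C(β). -/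
/-!
Write a displacement as `v = (β, u)`. The τ–τ block of the Hessian is coercive,
`c ‖u‖² ≤ H(u, u)`, by compactness of the unit sphere, so in the second-order expansion every
term that could make the loss decrease, apart from the gradient term `⟨β, ∇_β L⟩`, is
`O(‖β‖ ‖v‖)`, hence at most `δ ‖β‖` for any `δ > 0` once `v` is small. Near `0` the penalty is at
least `a ‖β‖₁` for any `a < 1`, while `|⟨β, ∇_β L⟩| ≤ ‖∇_β L‖_∞ ‖β‖₁`; choosing
`‖∇_β L‖_∞ < λ a` leaves a positive margin `λ a - ‖∇_β L‖_∞` to play the role of `δ`.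
-/

open Asymptotics Filter Topology

theorem Prod.sq_norm_le_norm_fst_mul_add_sq_norm_snd {E F : Type*} [SeminormedAddCommGroup E]
    [SeminormedAddCommGroup F] (v : E × F) : ‖v‖ ^ 2 ≤ ‖v.1‖ * ‖v‖ + ‖v.2‖ ^ 2 := by
  rcases le_total ‖v.1‖ ‖v.2‖ with h | h
  · rw [Prod.norm_def, max_eq_right h]; nlinarith [norm_nonneg v.1, norm_nonneg v.2]
  · rw [Prod.norm_def, max_eq_left h]; nlinarith [norm_nonneg v.1, norm_nonneg v.2]

section Bilinear

variable {E F : Type*} [NormedAddCommGroup E] [NormedSpace ℝ E]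
  [NormedAddCommGroup F] [NormedSpace ℝ F]

theorem ContinuousLinearMap.exists_pos_mul_sq_norm_le_apply_self [FiniteDimensional ℝ F]
    (B : F →L[ℝ] F →L[ℝ] ℝ) (hB : ∀ u, u ≠ 0 → 0 < B u u) :
    ∃ c > 0, ∀ u, c * ‖u‖ ^ 2 ≤ B u u := by
  rcases subsingleton_or_nontrivial F with hF | hF
  · exact ⟨1, one_pos, fun u => by simp [Subsingleton.elim u 0]⟩
  have hcont : Continuous fun u => B u u := B.continuous₂.comp (continuous_id.prodMk continuous_id)
  obtain ⟨u₀, hu₀, hmin⟩ := (isCompact_sphere (0 : F) 1).exists_isMinOn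
    (NormedSpace.sphere_nonempty.mpr zero_le_one) hcont.continuousOn
  have hu₀ : u₀ ≠ 0 := ne_zero_of_mem_unit_sphere ⟨u₀, hu₀⟩
  refine ⟨B u₀ u₀, hB u₀ hu₀, fun u => ?_⟩
  rcases eq_or_ne u 0 with rfl | hu
  · simp
  have hw : ‖u‖⁻¹ • u ∈ Metric.sphere (0 : F) 1 := by simp [norm_smul, hu]
  have hscale : B u u = ‖u‖ ^ 2 * B (‖u‖⁻¹ • u) (‖u‖⁻¹ • u) := by
    simp only [map_smul, smul_apply, smul_eq_mul]
    field_simp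
  rw [hscale, mul_comm]
  exact mul_le_mul_of_nonneg_left (hmin hw) (sq_nonneg _)

theorem ContinuousLinearMap.abs_apply_self_sub_apply_inr_le (B : E × F →L[ℝ] E × F →L[ℝ] ℝ)
    (v : E × F) : |B v v - B (0, v.2) (0, v.2)| ≤ 2 * ‖B‖ * (‖v.1‖ * ‖v‖) := by
  have hv : (v.1, 0) + (0, v.2) = v := by simp
  have hsplit : B v v - B (0, v.2) (0, v.2) = B (v.1, 0) v + B (0, v.2) (v.1, 0) := by
    have h₁ : B v v = B (v.1, 0) v + B (0, v.2) v := by rw [← add_apply, ← map_add, hv]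
    have h₂ : B (0, v.2) v = B (0, v.2) (v.1, 0) + B (0, v.2) (0, v.2) := by
      rw [← map_add, hv]
    rw [h₁, h₂]; ring
  have h₁ : ‖B (v.1, 0) v‖ ≤ ‖B‖ * (‖v.1‖ * ‖v‖) := by
    simpa [mul_assoc] using B.le_opNorm₂ (v.1, 0) v
  have h₂ : ‖B (0, v.2) (v.1, 0)‖ ≤ ‖B‖ * (‖v.1‖ * ‖v‖) := by
    calc ‖B (0, v.2) (v.1, 0)‖ ≤ ‖B‖ * ‖v.2‖ * ‖v.1‖ := by
          simpa using B.le_opNorm₂ (0, v.2) (v.1, 0)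
      _ ≤ ‖B‖ * ‖v‖ * ‖v.1‖ := by gcongr; exact _root_.norm_snd_le v
      _ = _ := by ring
  rw [hsplit, ← Real.norm_eq_abs]
  linarith [norm_add_le (B (v.1, 0) v) (B (0, v.2) (v.1, 0))]

theorem ContinuousLinearMap.eventually_neg_mul_norm_fst_le_half_apply_self_add
    (B : E × F →L[ℝ] E × F →L[ℝ] ℝ) {c : ℝ} (hc : 0 < c)
    (hBc : ∀ u, c * ‖u‖ ^ 2 ≤ B (0, u) (0, u)) {R : E × F → ℝ}
    (hR : R =o[𝓝 0] fun v => ‖v‖ ^ 2) {δ : ℝ} (hδ : 0 < δ) :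
    ∀ᶠ v in 𝓝 0, -(δ * ‖v.1‖) ≤ B v v / 2 + R v := by
  have hsmall : ∀ᶠ v in 𝓝 (0 : E × F), (‖B‖ + c / 4) * ‖v‖ < δ :=
    (mul_zero (‖B‖ + c / 4) ▸ tendsto_norm_zero.const_mul _).eventually_lt_const hδ
  filter_upwards [hR.def (by positivity : 0 < c / 4), hsmall] with v hR hsmall
  rw [Real.norm_eq_abs, norm_pow, norm_norm] at hR
  have hsq := mul_le_mul_of_nonneg_left (Prod.sq_norm_le_norm_fst_mul_add_sq_norm_snd v)
    (by positivity : (0 : ℝ) ≤ c / 4)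
  have hsmall' := mul_le_mul_of_nonneg_right hsmall.le (norm_nonneg v.1)
  linarith [neg_abs_le (R v), neg_abs_le (B v v - B (0, v.2) (0, v.2)),
    B.abs_apply_self_sub_apply_inr_le v, hBc v.2, mul_nonneg hc.le (sq_nonneg ‖v.2‖)]

end Bilinear

theorem Pi.norm_le_sum_norm {ι : Type*} [Fintype ι] {E : ι → Type*}
    [∀ i, SeminormedAddCommGroup (E i)] (x : ∀ i, E i) : ‖x‖ ≤ ∑ i, ‖x i‖ :=
  (pi_norm_le_iff_of_nonneg (by positivity)).2 fun i =>
    Finset.single_le_sum (f := fun i => ‖x i‖) (fun _ _ => norm_nonneg _) (Finset.mem_univ i)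

theorem neg_norm_mul_sum_abs_le_sum_mul {ι : Type*} [Fintype ι] (β g : ι → ℝ) :
    -(‖g‖ * ∑ j, |β j|) ≤ ∑ j, β j * g j := by
  have h : ∀ j, |β j * g j| ≤ |β j| * ‖g‖ := fun j => by
    rw [abs_mul, ← Real.norm_eq_abs (g j)]
    exact mul_le_mul_of_nonneg_left (norm_le_pi_norm g j) (abs_nonneg _)
  calc -(‖g‖ * ∑ j, |β j|) = -∑ j, |β j| * ‖g‖ := by rw [mul_comm, Finset.sum_mul]
    _ ≤ -|∑ j, β j * g j| :=
        neg_le_neg ((Finset.abs_sum_le_sum_abs _ _).trans (Finset.sum_le_sum fun j _ => h j))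
    _ ≤ ∑ j, β j * g j := neg_abs_le _

namespace Asymptotics.IsLittleO

variable {ρ : ℝ → ℝ} (hρ : (fun t => ρ t - |t|) =o[𝓝 0] fun t => |t|)
include hρ

theorem apply_zero_eq_zero : ρ 0 = 0 := by
  simpa using hρ.isBigO.eq_zero_imp.self_of_nhds (by simp)

theorem eventually_mul_abs_le {a : ℝ} (ha : a < 1) : ∀ᶠ t in 𝓝 0, a * |t| ≤ ρ t := by
  filter_upwards [hρ.def (sub_pos.2 ha)] with t ht
  rw [Real.norm_eq_abs, Real.norm_eq_abs, _root_.abs_abs] at ht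
  linarith [neg_abs_le (ρ t - |t|)]

theorem eventually_mul_sum_abs_le_sum {ι : Type*} [Fintype ι] {a : ℝ} (ha : a < 1) :
    ∀ᶠ β in 𝓝 (0 : ι → ℝ), a * ∑ j, |β j| ≤ ∑ j, ρ (β j) := by
  have h : ∀ j : ι, ∀ᶠ β in 𝓝 (0 : ι → ℝ), a * |β j| ≤ ρ (β j) := fun j =>
    ((continuous_apply j).tendsto (0 : ι → ℝ)).eventually (hρ.eventually_mul_abs_le ha)
  filter_upwards [eventually_all.2 h] with β hβ
  rw [Finset.mul_sum]
  exact Finset.sum_le_sum fun j _ => hβ j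

end Asymptotics.IsLittleO

theorem stmt0_general {p k : ℕ}
    (L : (Fin p → ℝ) × (Fin k → ℝ) → ℝ) (τhat : Fin k → ℝ)
    (gβ : Fin p → ℝ)
    (Q : ((Fin p → ℝ) × (Fin k → ℝ)) →ₗ[ℝ] ((Fin p → ℝ) × (Fin k → ℝ)) →ₗ[ℝ] ℝ)
    -- second-order Taylor expansion at (0, τ̂), with zero gradient in τ:
    (hTaylor :
      (fun v : (Fin p → ℝ) × (Fin k → ℝ) =>
          L (v.1, τhat + v.2) - L (0, τhat) - (∑ j, v.1 j * gβ j) - (1/2) * Q v v)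
        =o[nhds 0] fun v => ‖v‖ ^ 2)
    -- the τ–τ block of the Hessian is positive definite:
    (hQpos : ∀ u : Fin k → ℝ, u ≠ 0 →
      0 < Q ((0 : Fin p → ℝ), u) ((0 : Fin p → ℝ), u))
    -- C is a first-order ℓ1-equivalent complexity penalty:
    (ρ : ℝ → ℝ)
    (hρ_ℓ1 : (fun t => ρ t - |t|) =o[nhds (0 : ℝ)] fun t => |t|)
    (lam : ℝ)
    (hlam : ‖gβ‖ < lam) :
    IsLocalMin (fun v : (Fin p → ℝ) × (Fin k → ℝ) =>
      L v + lam * ∑ j, ρ (v.1 j)) (0, τhat) := by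
  have hlam₀ : 0 < lam := (norm_nonneg gβ).trans_lt hlam
  obtain ⟨a, hga, ha⟩ := exists_between ((div_lt_one hlam₀).2 hlam)
  have hgap : 0 < lam * a - ‖gβ‖ := by
    rw [div_lt_iff₀ hlam₀] at hga; linarith
  set B := Q.toContinuousBilinearMap
  obtain ⟨c, hc, hBc⟩ :=
    (B.bilinearComp (.inr ℝ _ _) (.inr ℝ _ _)).exists_pos_mul_sq_norm_le_apply_self
      (by simpa [B] using hQpos)
  have hquad :=
    B.eventually_neg_mul_norm_fst_le_half_apply_self_add hc (by simpa using hBc) hTaylor hgap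
  have hpen : ∀ᶠ v : (Fin p → ℝ) × (Fin k → ℝ) in 𝓝 0, a * ∑ j, |v.1 j| ≤ ∑ j, ρ (v.1 j) :=
    (continuous_fst.tendsto' 0 0 rfl).eventually (hρ_ℓ1.eventually_mul_sum_abs_le_sum ha)
  rw [IsLocalMin, IsMinFilter, ← map_add_left_nhds_zero, eventually_map]
  filter_upwards [hquad, hpen] with ⟨β, u⟩ hL hρβ
  simp only [Prod.mk_add_mk, zero_add, Pi.zero_apply, hρ_ℓ1.apply_zero_eq_zero,
    Finset.sum_const_zero, mul_zero, add_zero] at hL hρβ ⊢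
  have hBQ : B (β, u) (β, u) = Q (β, u) (β, u) := rfl
  have hβ : ‖β‖ ≤ ∑ j, |β j| := by simpa only [Real.norm_eq_abs] using Pi.norm_le_sum_norm β
  have hgap_mul := mul_le_mul_of_nonneg_left hβ hgap.le
  have hpenalty := mul_le_mul_of_nonneg_left hρβ hlam₀.le
  linarith [neg_norm_mul_sum_abs_le_sum_mul β gβ]

/-- If the loss `L(β, τ)` admits a second-order Taylor expansion at
`(0, τ̂)` with no linear term in `τ` (i.e. `∇_τ L(0, τ̂) = 0`), gradient `gβ` in `β`,
Hessian (bilinear form) `Q` whose `τ–τ` block is positive definite, and `C` is a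
first-order ℓ1-equivalent complexity penalty `C(β) = ∑ j, ρ (β j)`, then for any
`λ > ‖gβ‖_∞` the point `(0, τ̂)` is a local minimizer of `(β, τ) ↦ L(β, τ) + λ C(β)`. -/
theorem stmt0 {p k : ℕ}
    (L : (Fin p → ℝ) × (Fin k → ℝ) → ℝ) (τhat : Fin k → ℝ)
    (gβ : Fin p → ℝ)
    (Q : ((Fin p → ℝ) × (Fin k → ℝ)) →ₗ[ℝ] ((Fin p → ℝ) × (Fin k → ℝ)) →ₗ[ℝ] ℝ)
    -- second-order Taylor expansion at (0, τ̂), with zero gradient in τ: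
    (hTaylor :
      (fun v : (Fin p → ℝ) × (Fin k → ℝ) =>
          L (v.1, τhat + v.2) - L (0, τhat) - (∑ j, v.1 j * gβ j) - (1/2) * Q v v)
        =o[nhds 0] fun v => ‖v‖ ^ 2)
    -- the τ–τ block of the Hessian is positive definite:
    (hQpos : ∀ u : Fin k → ℝ, u ≠ 0 →
      0 < Q ((0 : Fin p → ℝ), u) ((0 : Fin p → ℝ), u))
    -- C is a first-order ℓ1-equivalent complexity penalty:
    (ρ : ℝ → ℝ)
    (hρ_nonneg : ∀ t, 0 ≤ ρ t)
    (hρ_even : ∀ t, ρ (-t) = ρ t)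
    (hρ_mono : MonotoneOn ρ (Set.Ici (0 : ℝ)))
    (hρ_ℓ1 : (fun t => ρ t - |t|) =o[nhds (0 : ℝ)] fun t => |t|)
    (lam : ℝ)
    (hlam : ‖gβ‖ < lam) :
    IsLocalMin (fun v : (Fin p → ℝ) × (Fin k → ℝ) =>
      L v + lam * ∑ j, ρ (v.1 j)) (0, τhat) :=
  stmt0_general L τhat gβ Q hTaylor hQpos ρ hρ_ℓ1 lam hlam
end

section
/- Let X be an n × p real matrix, S ≥ 1 an integer, and y ∈ ℝ^n such that RSS_s(y) > 0 for all s ∈ {0, 1, …, S}, where RSS_s(y) = inf { ‖y − β₀ 1 − X β‖₂² : β₀ ∈ ℝ, β ∈ ℝ^p, ‖β‖₀ = s } and ‖β‖₀ denotes the number of nonzero entries of β. Then for every a ≠ 0 and b ∈ ℝ, the BIC zero-threshold statistic Λ(y) = max_{1 ≤ s ≤ S} (1/s) log(RSS_0(y) / RSS_s(y)) satisfies Λ(a y + b 1) = Λ(y). -/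
open scoped Classical

/-- Best residual sum of squares over all models with intercept and exactly `s`
active predictors: `RSS_s(y) = inf { ‖y − β₀ 1 − X β‖₂² : ‖β‖₀ = s }`. -/
noncomputable def RSS {n p : ℕ} (X : Matrix (Fin n) (Fin p) ℝ) (s : ℕ)
    (y : Fin n → ℝ) : ℝ :=
  sInf { r : ℝ | ∃ (β₀ : ℝ) (β : Fin p → ℝ),
    (Finset.univ.filter fun j => β j ≠ 0).card = s ∧
    r = ∑ i, (y i - β₀ - ∑ j, X i j * β j) ^ 2 }

lemma sum_sq_residual_affine {ι κ R : Type*} [Fintype ι] [Fintype κ] [CommRing R]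
    (X : Matrix ι κ R) (y : ι → R) (a b β₀ : R) (β : κ → R) :
    ∑ i, (a * y i + b - (a * β₀ + b) - ∑ j, X i j * (a * β j)) ^ 2
      = a ^ 2 * ∑ i, (y i - β₀ - ∑ j, X i j * β j) ^ 2 := by
  have hlin (i : ι) : ∑ j, X i j * (a * β j) = a * ∑ j, X i j * β j := by
    rw [Finset.mul_sum]; simp_rw [mul_left_comm]
  simp_rw [hlin]
  rw [Finset.mul_sum]
  exact Finset.sum_congr rfl fun i _ => by ring

lemma card_filter_mul_ne_zero {ι M : Type*} [Fintype ι] [MulZeroClass M] [NoZeroDivisors M]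
    (β : ι → M) {a : M} (ha : a ≠ 0) :
    (Finset.univ.filter fun j => a * β j ≠ 0).card
      = (Finset.univ.filter fun j => β j ≠ 0).card := by
  simp only [ne_eq, mul_eq_zero, ha, false_or]

/-- The substitution `(β₀, β) ↦ (a β₀ + b, a β)` is a bijection of the models of size `s`
that multiplies every residual sum of squares by `a²`. -/
lemma RSS_affine {n p : ℕ} (X : Matrix (Fin n) (Fin p) ℝ) (s : ℕ) (y : Fin n → ℝ)
    {a : ℝ} (b : ℝ) (ha : a ≠ 0) :
    RSS X s (fun i => a * y i + b) = a ^ 2 * RSS X s y := by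
  unfold RSS
  rw [← smul_eq_mul, ← Real.sInf_smul_of_nonneg (sq_nonneg a)]
  congr 1
  ext r
  constructor
  · rintro ⟨β₀, β, hcard, rfl⟩
    obtain ⟨γ₀, rfl⟩ : ∃ γ₀, β₀ = a * γ₀ + b := ⟨(β₀ - b) / a, by field_simp; ring⟩
    obtain ⟨γ, rfl⟩ : ∃ γ : Fin p → ℝ, β = fun j => a * γ j :=
      ⟨fun j => β j / a, by ext; field_simp⟩
    exact ⟨_, ⟨γ₀, γ, (card_filter_mul_ne_zero γ ha).symm.trans hcard, rfl⟩,
      (sum_sq_residual_affine X y a b γ₀ γ).symm⟩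
  · rintro ⟨_, ⟨β₀, β, hcard, rfl⟩, rfl⟩
    exact ⟨a * β₀ + b, fun j => a * β j, (card_filter_mul_ne_zero β ha).trans hcard,
      (sum_sq_residual_affine X y a b β₀ β).symm⟩

lemma RSS_div_RSS_affine {n p : ℕ} (X : Matrix (Fin n) (Fin p) ℝ) (s t : ℕ) (y : Fin n → ℝ)
    {a : ℝ} (b : ℝ) (ha : a ≠ 0) :
    RSS X s (fun i => a * y i + b) / RSS X t (fun i => a * y i + b) = RSS X s y / RSS X t y := by
  rw [RSS_affine X s y b ha, RSS_affine X t y b ha, mul_div_mul_left _ _ (pow_ne_zero 2 ha)]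

theorem stmt9_general {n p : ℕ} (X : Matrix (Fin n) (Fin p) ℝ) (S : ℕ)
    (y : Fin n → ℝ)
    (hne : (Finset.Icc 1 S).Nonempty)
    (a b : ℝ) (ha : a ≠ 0) :
    (Finset.Icc 1 S).sup' hne
        (fun s => (1 / (s : ℝ)) *
          Real.log (RSS X 0 (fun i => a * y i + b) / RSS X s (fun i => a * y i + b)))
      = (Finset.Icc 1 S).sup' hne
          (fun s => (1 / (s : ℝ)) * Real.log (RSS X 0 y / RSS X s y)) := by
  simp_rw [RSS_div_RSS_affine X 0 _ y b ha]

/-- Finite-sample pivotality of BIC's zero-thresholding statistic: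
if `RSS_s(y) > 0` for all `s ∈ {0, …, S}`, then
`Λ(y) = max_{1 ≤ s ≤ S} (1/s) log(RSS_0(y)/RSS_s(y))` is invariant under
`y ↦ a y + b 1` for every `a ≠ 0` and `b ∈ ℝ`. -/
theorem stmt9 {n p : ℕ} (X : Matrix (Fin n) (Fin p) ℝ) (S : ℕ) (hS : 1 ≤ S)
    (y : Fin n → ℝ) (hRSS : ∀ s ≤ S, 0 < RSS X s y)
    (hne : (Finset.Icc 1 S).Nonempty)
    (a b : ℝ) (ha : a ≠ 0) :
    (Finset.Icc 1 S).sup' hne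
        (fun s => (1 / (s : ℝ)) *
          Real.log (RSS X 0 (fun i => a * y i + b) / RSS X s (fun i => a * y i + b)))
      = (Finset.Icc 1 S).sup' hne
          (fun s => (1 / (s : ℝ)) * Real.log (RSS X 0 y / RSS X s y)) :=
  stmt9_general X S y hne a b ha
end

section
/- Let X be an n × p real matrix, y ∈ ℝ^n, ȳ = (1/n) Σ_{i=1}^n y_i, and λ ≥ 0. Then (β₀, β) = (ȳ, 0) is a global minimizer over ℝ × ℝ^p of the LASSO objective (β₀, β) ↦ (1/2) ‖y − β₀ 1 − X β‖₂² + λ ‖β‖₁ if and only if λ ≥ ‖Xᵀ(y − ȳ 1)‖_∞. -/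
/-!
Put `r = y - ȳ 1`, which sums to zero, and `c = Xᵀ r`. Because `r ⟂ 1`, the intercept drops out of
the cross term, and the objective at `(β₀, β)` exceeds its value at `(ȳ, 0)` by
`½ ‖(β₀ - ȳ) 1 + X β‖² - ⟨β, c⟩ + λ ‖β‖₁`.
If `‖c‖_∞ ≤ λ`, the duality `⟨β, c⟩ ≤ ‖c‖_∞ ‖β‖₁` makes this nonnegative. Conversely, testing
`β = t eⱼ` gives `t cⱼ ≤ a t² + λ |t|` for all real `t`, and letting `t → 0±` yields `|cⱼ| ≤ λ`.
-/

open Finset Filter Topology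

theorem le_of_forall_pos_mul_le_sq_add {a c lam : ℝ}
    (h : ∀ t > 0, t * c ≤ a * t ^ 2 + lam * t) : c ≤ lam := by
  have hlim : Tendsto (fun t => a * t + lam) (𝓝[>] 0) (𝓝 lam) := by
    have : Continuous fun t : ℝ => a * t + lam := by fun_prop
    simpa using (this.tendsto 0).mono_left nhdsWithin_le_nhds
  refine ge_of_tendsto hlim (eventually_nhdsWithin_of_forall fun t (ht : 0 < t) => ?_)
  exact le_of_mul_le_mul_left (by linarith [h t ht]) ht

theorem abs_le_of_forall_mul_le_sq_add_abs {a c lam : ℝ}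
    (h : ∀ t, t * c ≤ a * t ^ 2 + lam * |t|) : |c| ≤ lam := by
  refine abs_le.mpr ⟨?_, ?_⟩
  · have := le_of_forall_pos_mul_le_sq_add (a := a) (c := -c) (lam := lam) fun t ht => by
      simpa [abs_of_pos ht] using h (-t)
    linarith
  · exact le_of_forall_pos_mul_le_sq_add fun t ht => by simpa [abs_of_pos ht] using h t

theorem sum_sub_mean_eq_zero {ι : Type*} [Fintype ι] (y : ι → ℝ) :
    ∑ i, (y i - 1 / (Fintype.card ι : ℝ) * ∑ i, y i) = 0 := by
  rcases isEmpty_or_nonempty ι with hι | hι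
  · simp
  · rw [sum_sub_distrib, sum_const, card_univ, nsmul_eq_mul, ← mul_assoc,
      mul_one_div_cancel (by positivity), one_mul, sub_self]

theorem sum_mul_le_norm_mul_sum_abs {κ : Type*} [Fintype κ] (β c : κ → ℝ) :
    ∑ j, β j * c j ≤ ‖c‖ * ∑ j, |β j| := by
  rw [mul_sum]
  refine sum_le_sum fun j _ => ?_
  calc β j * c j ≤ |β j| * |c j| := (le_abs_self _).trans (abs_mul _ _).le
    _ ≤ ‖c‖ * |β j| := by
      rw [mul_comm]
      gcongr
      exact (Real.norm_eq_abs (c j)).symm.le.trans (norm_le_pi_norm c j)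

section CenteredResidual

variable {ι κ : Type*} [Fintype ι] [Fintype κ] (X : Matrix ι κ ℝ) {r : ι → ℝ}

theorem sum_mul_affine_eq_of_sum_eq_zero (hr : ∑ i, r i = 0) (b : ℝ) (β : κ → ℝ) :
    ∑ i, r i * (b + ∑ j, X i j * β j) = ∑ j, β j * ∑ i, X i j * r i := by
  simp only [mul_add, sum_add_distrib, ← sum_mul, hr, zero_mul, zero_add, mul_sum]
  rw [sum_comm]
  exact sum_congr rfl fun j _ => sum_congr rfl fun i _ => by ring

theorem sum_sq_sub_affine_of_sum_eq_zero (hr : ∑ i, r i = 0) (b : ℝ) (β : κ → ℝ) :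
    ∑ i, (r i - b - ∑ j, X i j * β j) ^ 2 =
      ∑ i, r i ^ 2 - 2 * ∑ j, β j * (∑ i, X i j * r i) + ∑ i, (b + ∑ j, X i j * β j) ^ 2 := by
  rw [← sum_mul_affine_eq_of_sum_eq_zero X hr, mul_sum, ← sum_sub_distrib, ← sum_add_distrib]
  exact sum_congr rfl fun i _ => by ring

end CenteredResidual

/-- Zero-thresholding function of LASSO with intercept:
`(β₀, β) = (ȳ, 0)` globally minimizes
`(β₀, β) ↦ (1/2) ‖y − β₀ 1 − X β‖₂² + λ ‖β‖₁` iff `λ ≥ ‖Xᵀ(y − ȳ 1)‖_∞`. -/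
theorem stmt12 {n p : ℕ} (X : Matrix (Fin n) (Fin p) ℝ) (y : Fin n → ℝ)
    (lam : ℝ) (hlam : 0 ≤ lam)
    (ybar : ℝ) (hybar : ybar = (1 / (n : ℝ)) * ∑ i, y i) :
    (∀ (β₀ : ℝ) (β : Fin p → ℝ),
        (1 / 2) * (∑ i, (y i - ybar - ∑ j, X i j * (0 : ℝ)) ^ 2)
            + lam * ∑ j : Fin p, |(0 : ℝ)|
          ≤ (1 / 2) * (∑ i, (y i - β₀ - ∑ j, X i j * β j) ^ 2)
            + lam * ∑ j, |β j|) ↔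
      ‖(fun j => ∑ i, X i j * (y i - ybar) : Fin p → ℝ)‖ ≤ lam := by
  set c : Fin p → ℝ := fun j => ∑ i, X i j * (y i - ybar)
  have hr : ∑ i, (y i - ybar) = 0 := by
    rw [hybar]
    simpa only [Fintype.card_fin] using sum_sub_mean_eq_zero y
  have hexpand : ∀ (β₀ : ℝ) (β : Fin p → ℝ), ∑ i, (y i - β₀ - ∑ j, X i j * β j) ^ 2 =
      ∑ i, (y i - ybar) ^ 2 - 2 * ∑ j, β j * c j + ∑ i, (β₀ - ybar + ∑ j, X i j * β j) ^ 2 :=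
    fun β₀ β => by
      rw [← sum_sq_sub_affine_of_sum_eq_zero X hr]
      exact sum_congr rfl fun i _ => by ring
  simp only [mul_zero, sum_const_zero, sub_zero, abs_zero, add_zero, hexpand]
  constructor
  · intro h
    refine (pi_norm_le_iff_of_nonneg hlam).mpr fun j => ?_
    refine abs_le_of_forall_mul_le_sq_add_abs (a := (1 / 2) * ∑ i, X i j ^ 2) fun t => ?_
    have h_single := h ybar (Pi.single j t)
    simp only [Pi.single_apply, ite_mul, zero_mul, mul_ite, mul_zero, sum_ite_eq', mem_univ, ↓reduceIte, sub_self,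
      zero_add, mul_pow, ← sum_mul, apply_ite abs, abs_zero] at h_single
    linarith
  · intro hc β₀ β
    have hsq : 0 ≤ ∑ i, (β₀ - ybar + ∑ j, X i j * β j) ^ 2 :=
      sum_nonneg fun i _ => sq_nonneg _
    have hdual := (sum_mul_le_norm_mul_sum_abs β c).trans
      (mul_le_mul_of_nonneg_right hc (sum_nonneg fun j _ => abs_nonneg (β j)))
    linarith
end
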